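/- arXiv:1912.07314 — 2 statements merged into one kernel-verified Lean document; each statement's English description precedes it below -/
import Mathlib

section
/- Let G = (V, E) be a directed graph and s, t ∈ V. Build an NFA over alphabet {a, b} with states V ∪ {t'} (t' a fresh state), transitions {(p,a,r) | (p,r) ∈ E} together with (t,b,t'), where a is observable and b is unobservable, and let P be the corresponding projection to {a}*. Let L_S be the language accepted from initial state s with accepting set {t}, and L_NS the language accepted from s with accepting set {t'}. Then P(L_S) ∩ P(L_NS) ≠ ∅ if and only if t is reachable from s in G. -/
/-- The automaton of STATEMENT 6: states `Option V` (`none` is the fresh state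
`t'`), alphabet `Bool` where `false` is the observable event `a` and `true` is
the unobservable event `b`; `a`-transitions follow the edges of the graph and
there is a single `b`-transition from `t` to `t'`. -/
def graphNFA {V : Type*} (E : V → V → Prop) (t : V) : NFA Bool (Option V) where
  step q e :=
    match q, e with
    | some p, false => {x | ∃ r, E p r ∧ x = some r}
    | some p, true => {x | p = t ∧ x = none}
    | none, _ => ∅
  start := ∅
  accept := ∅

/-- The projection to `{a}*` erasing the unobservable event `b = true`. -/
def projA (w : List Bool) : List Bool := w.filter (fun e => !e)

/-!
The only transition into a state of `V` is an `a`-step along an edge of the graph, so a state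
`q ∈ V` is reached on some word from `s` exactly when `q` is reachable from `s` in `G`. Such a
word `w` reaching `t` is in `L_S`, and `w b` is in `L_NS` with the same projection; conversely
any word of `L_S` already witnesses a path from `s` to `t`.
-/

theorem projA_append_true (w : List Bool) : projA (w ++ [true]) = projA w := by
  simp [projA]

namespace graphNFA

variable {V : Type*} {E : V → V → Prop} {t : V}

theorem some_mem_stepSet {S : Set (Option V)} {e : Bool} {q : V} :
    some q ∈ (graphNFA E t).stepSet S e ↔ e = false ∧ ∃ p, some p ∈ S ∧ E p q := by
  rw [NFA.mem_stepSet]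
  constructor
  · rintro ⟨_ | p, hp, hq⟩
    · cases e <;> exact hq.elim
    · cases e with
      | false =>
        obtain ⟨r, hpr, hqr⟩ := hq
        exact ⟨rfl, p, hp, Option.some_inj.1 hqr ▸ hpr⟩
      | true => exact absurd hq.2 (Option.some_ne_none q)
  · rintro ⟨rfl, p, hp, hpq⟩
    exact ⟨some p, hp, q, hpq, rfl⟩

theorem none_mem_evalFrom_append_true {S : Set (Option V)} {w : List Bool}
    (h : some t ∈ (graphNFA E t).evalFrom S w) :
    none ∈ (graphNFA E t).evalFrom S (w ++ [true]) := by
  rw [NFA.evalFrom_append, NFA.evalFrom_singleton, NFA.mem_stepSet]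
  exact ⟨some t, h, rfl, rfl⟩

theorem exists_reflTransGen_of_some_mem_evalFrom {S : Set (Option V)} {w : List Bool} {q : V}
    (h : some q ∈ (graphNFA E t).evalFrom S w) :
    ∃ p, some p ∈ S ∧ Relation.ReflTransGen E p q := by
  induction w generalizing S with
  | nil => exact ⟨q, h, .refl⟩
  | cons e w ih =>
    obtain ⟨r, hr, hrq⟩ := ih (NFA.evalFrom_cons .. ▸ h)
    obtain ⟨-, p, hp, hpr⟩ := some_mem_stepSet.1 hr
    exact ⟨p, hp, .head hpr hrq⟩

theorem reflTransGen_iff_exists_some_mem_evalFrom {p q : V} :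
    Relation.ReflTransGen E p q ↔ ∃ w, some q ∈ (graphNFA E t).evalFrom {some p} w := by
  constructor
  · intro h
    induction h with
    | refl => exact ⟨[], rfl⟩
    | tail _ hE ih =>
      obtain ⟨w, hw⟩ := ih
      refine ⟨w ++ [false], ?_⟩
      rw [NFA.evalFrom_append, NFA.evalFrom_singleton]
      exact some_mem_stepSet.2 ⟨rfl, _, hw, hE⟩
  · rintro ⟨w, hw⟩
    obtain ⟨p', hp', hpath⟩ := exists_reflTransGen_of_some_mem_evalFrom hw
    obtain rfl : p' = p := by simpa using hp'
    exact hpath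

end graphNFA

/-- `P(L_S) ∩ P(L_NS) ≠ ∅` iff `t` is reachable from `s`, where
`L_S` is accepted from `s` with accepting set `{t}` and `L_NS` with accepting
set `{t'}`. -/
theorem weak_opacity_iff_reachable {V : Type*} (E : V → V → Prop) (s t : V) :
    (projA '' {w | some t ∈ (graphNFA E t).evalFrom {some s} w} ∩
      projA '' {w | none ∈ (graphNFA E t).evalFrom {some s} w}).Nonempty ↔
      Relation.ReflTransGen E s t := by
  rw [graphNFA.reflTransGen_iff_exists_some_mem_evalFrom]
  constructor
  · rintro ⟨_, ⟨w, hw, -⟩, -⟩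
    exact ⟨w, hw⟩
  · rintro ⟨w, hw⟩
    exact ⟨projA w, ⟨w, hw, rfl⟩, w ++ [true], graphNFA.none_mem_evalFrom_append_true hw,
      projA_append_true w⟩
end

section
/- Let L_S and L_NS be languages over Σ recognized by nonblocking automata G_s and G_ns respectively, let @ be a fresh observable event, and extend G_s (resp. G_ns) by adding a transition on @ from every marked state to a fresh state x_s (resp. x_ns). Then the language generated by the extended G_s is the prefix closure of L_S union L_S·@, and similarly for G_ns. Moreover, for the projection P extended with P(@) = @, we have P(L_S) ⊆ P(L_NS) if and only if P(prefix-closure(L_S) ∪ L_S·@) ⊆ P(prefix-closure(L_NS) ∪ L_NS·@). -/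
def atExt {S Q : Type*} (G : NFA S Q) : NFA (Option S) (Option Q) where
  step p e :=
    match p, e with
    | some r, some σ => some '' G.step r σ
    | some r, none => {x | r ∈ G.accept ∧ x = none}
    | none, _ => ∅
  start := some '' G.start
  accept := {none}

def marked {S Q : Type*} (G : NFA S Q) : Set (List S) :=
  {w | (G.evalFrom G.start w ∩ G.accept).Nonempty}

def gen {S Q : Type*} (G : NFA S Q) : Set (List S) :=
  {w | (G.evalFrom G.start w).Nonempty}

def Nonblocking {S Q : Type*} (G : NFA S Q) : Prop :=
  ∀ (w : List S) (q : Q), q ∈ G.evalFrom G.start w →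
    ∃ v : List S, (G.evalFrom {q} v ∩ G.accept).Nonempty

def prefCl {S : Type*} (L : Set (List S)) : Set (List S) :=
  {u | ∃ v, u ++ v ∈ L}

def extLang {S : Type*} (L : Set (List S)) : Set (List (Option S)) :=
  (fun u => u.map some) '' prefCl L ∪ (fun u => u.map some ++ [none]) '' L

def projExt {S : Type*} (obs : S → Bool) (w : List (Option S)) : List (Option S) :=
  w.filter (fun e => e.elim true obs)

section Aux

variable {S Q : Type*}

lemma evalFrom_append' (G : NFA S Q) (X : Set Q) (u v : List S) :
    G.evalFrom X (u ++ v) = G.evalFrom (G.evalFrom X u) v := by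
  simp [NFA.evalFrom, List.foldl_append]

lemma stepSet_mono (G : NFA S Q) {X Y : Set Q} (h : X ⊆ Y) (a : S) :
    G.stepSet X a ⊆ G.stepSet Y a := by
  simp only [NFA.stepSet]
  exact Set.biUnion_subset_biUnion_left h

lemma evalFrom_mono (G : NFA S Q) {X Y : Set Q} (h : X ⊆ Y) (w : List S) :
    G.evalFrom X w ⊆ G.evalFrom Y w := by
  induction w generalizing X Y with
  | nil => simpa [NFA.evalFrom]
  | cons a w ih =>
    simpa [NFA.evalFrom] using ih (stepSet_mono G h a)

lemma evalFrom_empty' (G : NFA S Q) (w : List S) : G.evalFrom ∅ w = ∅ := by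
  induction w with
  | nil => rfl
  | cons a w ih => simpa [NFA.evalFrom, NFA.stepSet_empty] using ih

lemma atExt_stepSet_some (G : NFA S Q) (X : Set Q) (a : S) :
    (atExt G).stepSet (some '' X) (some a) = some '' G.stepSet X a := by
  ext x
  simp only [NFA.stepSet, atExt, Set.mem_iUnion, Set.mem_image]
  constructor
  · rintro ⟨p, ⟨q, hq, rfl⟩, hx⟩
    obtain ⟨r, hr, rfl⟩ := hx
    exact ⟨r, ⟨q, hq, hr⟩, rfl⟩
  · rintro ⟨r, ⟨q, hq, hr⟩, rfl⟩
    exact ⟨some q, ⟨q, hq, rfl⟩, ⟨r, hr, rfl⟩⟩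

lemma atExt_evalFrom_map (G : NFA S Q) (X : Set Q) (w : List S) :
    (atExt G).evalFrom (some '' X) (w.map some) = some '' G.evalFrom X w := by
  induction w generalizing X with
  | nil => rfl
  | cons a w ih =>
    simp only [List.map_cons, NFA.evalFrom, List.foldl_cons] at *
    rw [atExt_stepSet_some]
    exact ih _

lemma atExt_stepSet_none (G : NFA S Q) (X : Set Q) (x : Option Q) :
    x ∈ (atExt G).stepSet (some '' X) none ↔ (X ∩ G.accept).Nonempty ∧ x = none := by
  simp only [NFA.stepSet, Set.mem_iUnion, Set.mem_image]
  constructor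
  · rintro ⟨p, ⟨q, hq, rfl⟩, hx⟩
    obtain ⟨hacc, rfl⟩ := hx
    exact ⟨⟨q, hq, hacc⟩, rfl⟩
  · rintro ⟨⟨q, hq, hacc⟩, rfl⟩
    exact ⟨some q, ⟨q, hq, rfl⟩, hacc, rfl⟩

lemma atExt_stepSet_sub_none (G : NFA S Q) {T : Set (Option Q)}
    (hT : T ⊆ {none}) (a : Option S) : (atExt G).stepSet T a = ∅ := by
  ext x
  simp only [NFA.stepSet, Set.mem_iUnion, Set.mem_empty_iff_false, iff_false]
  rintro ⟨p, hp, hx⟩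
  have : p = none := hT hp
  subst this
  cases a <;> exact hx

lemma exists_none_split {w : List (Option S)} (h : (none : Option S) ∈ w) :
    ∃ (u : List S) (w2 : List (Option S)), w = u.map some ++ none :: w2 := by
  induction w with
  | nil => simp at h
  | cons a w ih =>
    cases a with
    | none => exact ⟨[], w, rfl⟩
    | some s =>
      obtain ⟨u, w2, rfl⟩ := ih (by simpa using h)
      exact ⟨s :: u, w2, rfl⟩

lemma exists_map_some {w : List (Option S)} (h : (none : Option S) ∉ w) :
    ∃ u : List S, w = u.map some := by
  induction w with
  | nil => exact ⟨[], rfl⟩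
  | cons a w ih =>
    cases a with
    | none => simp at h
    | some s =>
      obtain ⟨u, rfl⟩ := ih (fun hw => h (List.mem_cons_of_mem _ hw))
      exact ⟨s :: u, rfl⟩

lemma gen_atExt (G : NFA S Q) (h : Nonblocking G) :
    gen (atExt G) = extLang (marked G) := by
  ext w
  constructor
  · intro hw
    obtain ⟨x, hx⟩ := hw
    by_cases hn : (none : Option S) ∈ w
    · obtain ⟨u, w2, rfl⟩ := exists_none_split hn
      have hstart : (atExt G).start = some '' G.start := rfl
      have heq : (atExt G).evalFrom (atExt G).start (u.map some ++ none :: w2)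
          = (atExt G).evalFrom ((atExt G).stepSet (some '' G.evalFrom G.start u) none) w2 := by
        rw [show u.map some ++ none :: w2 = (u.map some ++ [none]) ++ w2 by simp,
          evalFrom_append', evalFrom_append', hstart, atExt_evalFrom_map]
        rfl
      have hsub : (atExt G).stepSet (some '' G.evalFrom G.start u) none ⊆ {none} := by
        intro y hy
        exact ((atExt_stepSet_none G _ y).1 hy).2
      cases w2 with
      | cons b w2 =>
        rw [heq] at hx
        rw [show (atExt G).evalFrom _ (b :: w2)
            = (atExt G).evalFrom ((atExt G).stepSet _ b) w2 from rfl,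
          atExt_stepSet_sub_none G hsub, evalFrom_empty'] at hx
        exact absurd hx (Set.notMem_empty x)
      | nil =>
        rw [heq] at hx
        have := (atExt_stepSet_none G _ x).1 hx
        exact Or.inr ⟨u, this.1, by simp⟩
    · obtain ⟨u, rfl⟩ := exists_map_some hn
      rw [show (atExt G).start = some '' G.start from rfl, atExt_evalFrom_map] at hx
      obtain ⟨q, hq, rfl⟩ := hx
      obtain ⟨v, hv⟩ := h u q hq
      refine Or.inl ⟨u, ⟨v, ?_⟩, rfl⟩
      refine hv.mono (Set.inter_subset_inter_left _ ?_)
      rw [evalFrom_append']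
      exact evalFrom_mono G (Set.singleton_subset_iff.2 hq) v
  · rintro (⟨u, ⟨v, huv⟩, rfl⟩ | ⟨u, hu, rfl⟩)
    · have h1 : (G.evalFrom G.start (u ++ v)).Nonempty :=
        huv.mono (Set.inter_subset_left)
      have h2 : (G.evalFrom G.start u).Nonempty := by
        by_contra hc
        rw [Set.not_nonempty_iff_eq_empty] at hc
        rw [evalFrom_append', hc, evalFrom_empty'] at h1
        exact h1.ne_empty rfl
      show ((atExt G).evalFrom (atExt G).start (u.map some)).Nonempty
      rw [show (atExt G).start = some '' G.start from rfl, atExt_evalFrom_map]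
      exact h2.image some
    · show ((atExt G).evalFrom (atExt G).start (u.map some ++ [none])).Nonempty
      rw [evalFrom_append', show (atExt G).start = some '' G.start from rfl,
        atExt_evalFrom_map]
      exact ⟨none, (atExt_stepSet_none G _ none).2 ⟨hu, rfl⟩⟩

lemma projExt_map_some (obs : S → Bool) (u : List S) :
    projExt obs (u.map some) = (u.filter obs).map some := by
  simp only [projExt, List.filter_map]
  rfl

lemma projExt_map_some_at (obs : S → Bool) (u : List S) :
    projExt obs (u.map some ++ [none]) = (u.filter obs).map some ++ [none] := by
  simp only [projExt, List.filter_append]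
  rw [← projExt, projExt_map_some]
  rfl

end Aux

/-- the extended nonblocking automata generate exactly
`prefix-closure(L) ∪ L·@`, and `P(L_S) ⊆ P(L_NS)` iff
`P(pref(L_S) ∪ L_S·@) ⊆ P(pref(L_NS) ∪ L_NS·@)`. -/
theorem lbo_to_iso_reduction {S Qs Qns : Type*} (obs : S → Bool)
    (Gs : NFA S Qs) (Gns : NFA S Qns)
    (hs : Nonblocking Gs) (hns : Nonblocking Gns) :
    gen (atExt Gs) = extLang (marked Gs) ∧
    gen (atExt Gns) = extLang (marked Gns) ∧
    ((fun w => w.filter obs) '' marked Gs ⊆ (fun w => w.filter obs) '' marked Gns ↔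
      projExt obs '' extLang (marked Gs) ⊆ projExt obs '' extLang (marked Gns)) := by
  refine ⟨gen_atExt Gs hs, gen_atExt Gns hns, ?_, ?_⟩
  · -- forward
    intro h x hx
    obtain ⟨z, hz, rfl⟩ := hx
    rcases hz with ⟨u, ⟨v, huv⟩, rfl⟩ | ⟨u, hu, rfl⟩
    · obtain ⟨w, hw, hweq⟩ := h ⟨u ++ v, huv, rfl⟩
      simp only at hweq
      rw [List.filter_append] at hweq
      obtain ⟨w1, w2, rfl, hw1, _⟩ := List.filter_eq_append_iff.1 hweq
      refine ⟨w1.map some, Or.inl ⟨w1, ⟨w2, hw⟩, rfl⟩, ?_⟩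
      rw [projExt_map_some, projExt_map_some, hw1]
    · obtain ⟨w, hw, hweq⟩ := h ⟨u, hu, rfl⟩
      refine ⟨w.map some ++ [none], Or.inr ⟨w, hw, rfl⟩, ?_⟩
      rw [projExt_map_some_at, projExt_map_some_at,
        show List.filter obs w = List.filter obs u from hweq]
  · -- backward
    intro h x hx
    obtain ⟨u, hu, rfl⟩ := hx
    obtain ⟨z, hz, hzeq⟩ := h ⟨u.map some ++ [none], Or.inr ⟨u, hu, rfl⟩, rfl⟩
    rcases hz with ⟨w, _, rfl⟩ | ⟨w, hw, rfl⟩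
    · exfalso
      rw [projExt_map_some, projExt_map_some_at] at hzeq
      have : (none : Option S) ∈ (u.filter obs).map some ++ [none] := by simp
      rw [← hzeq] at this
      simp at this
    · rw [projExt_map_some_at, projExt_map_some_at] at hzeq
      have h2 : (w.filter obs).map some = (u.filter obs).map some :=
        List.append_inj_left' hzeq rfl
      have h3 : w.filter obs = u.filter obs :=
        List.map_injective_iff.2 (Option.some_injective S) h2
      exact ⟨w, hw, h3⟩
end
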